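/- Let X be a real Hausdorff locally convex space and C ⊆ X. The normal cone N_C is a maximal monotone operator if and only if for every x ∈ X \ C there exists n* in the range R(N_C) of the normal cone (equivalently, n* is a support functional of C) such that ⟨x, n*⟩ > σ_C(n*). -/

import Mathlib

open Set Classical

section Defs

variable {X : Type*} [AddCommGroup X] [Module ℝ X] [TopologicalSpace X]

/-- Graph of the normal cone `N_C` of a set `C`: `x* ∈ N_C(x)` iff `x ∈ C` and
`⟨y - x, x*⟩ ≤ 0` for all `y ∈ C`. -/
def normalConeGraph (C : Set X) : Set (X × (X →L[ℝ] ℝ)) :=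
  {p | p.1 ∈ C ∧ ∀ y ∈ C, p.2 (y - p.1) ≤ 0}

/-- The Fitzpatrick function of a multivalued operator given by its graph `G`:
`φ_T(x, x*) = sup {⟨x - a, a*⟩ + ⟨a, x*⟩ : (a, a*) ∈ G}`, with `sup ∅ = ⊥ = -∞`. -/
noncomputable def fitzpatrick (G : Set (X × (X →L[ℝ] ℝ))) (x : X) (x' : X →L[ℝ] ℝ) : EReal :=
  sSup ((fun p => ((p.2 (x - p.1) + x' p.1 : ℝ) : EReal)) '' G)

/-- Indicator function of a set, with values in `EReal`: `0` on `A`, `+∞` outside. -/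
noncomputable def indicatorE (A : Set X) (x : X) : EReal := if x ∈ A then 0 else ⊤

/-- Support function `σ_C(x*) = sup {⟨x, x*⟩ : x ∈ C}`, with `sup ∅ = ⊥ = -∞`. -/
noncomputable def supportFn (C : Set X) (x' : X →L[ℝ] ℝ) : EReal :=
  sSup ((fun x => ((x' x : ℝ) : EReal)) '' C)

/-- The portable hull `C#` of `C`: all `x` with `⟨x - a, a*⟩ ≤ 0` for every
`(a, a*)` in the graph of `N_C`. -/
def portableHull (C : Set X) : Set X :=
  {x | ∀ p ∈ normalConeGraph C, p.2 (x - p.1) ≤ 0}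

/-- A graph `G ⊆ X × X*` is monotone. -/
def IsMonotoneGraph (G : Set (X × (X →L[ℝ] ℝ))) : Prop :=
  ∀ p ∈ G, ∀ q ∈ G, 0 ≤ (p.2 - q.2) (p.1 - q.1)

/-- A graph is maximal monotone: nonempty, monotone, and maximal under inclusion
among monotone graphs. -/
def IsMaximalMonotone (G : Set (X × (X →L[ℝ] ℝ))) : Prop :=
  G.Nonempty ∧ IsMonotoneGraph G ∧ ∀ G', IsMonotoneGraph G' → G ⊆ G' → G' = G

end Defs

variable {X : Type*} [AddCommGroup X] [Module ℝ X] [TopologicalSpace X]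
  [IsTopologicalAddGroup X] [ContinuousSMul ℝ X] [LocallyConvexSpace ℝ X] [T2Space X]

lemma normalConeGraph_monotone (C : Set X) : IsMonotoneGraph (normalConeGraph C) := by
  rintro ⟨a, a'⟩ ⟨ha, ha'⟩ ⟨b, b'⟩ ⟨hb, hb'⟩
  have h1 := ha' b hb
  have h2 := hb' a ha
  simp only [ContinuousLinearMap.sub_apply, map_sub] at *
  linarith

lemma zero_mem_normalConeGraph {C : Set X} {a : X} (ha : a ∈ C) :
    (a, (0 : X →L[ℝ] ℝ)) ∈ normalConeGraph C :=
  ⟨ha, fun y _ => by simp⟩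

/-- `N_C` is maximal monotone iff every `x ∉ C` is strictly separated from `C` by a
support functional of `C`, i.e. some `n* ∈ R(N_C)` with `⟨x, n*⟩ > σ_C(n*)`. -/
theorem normalCone_maximalMonotone_iff_separation (C : Set X) :
    IsMaximalMonotone (normalConeGraph C) ↔
      ∀ x ∉ C, ∃ n : X →L[ℝ] ℝ, (∃ a : X, (a, n) ∈ normalConeGraph C) ∧
        supportFn C n < ((n x : ℝ) : EReal) := by
  constructor
  · rintro ⟨hne, hmono, hmax⟩ x hx
    by_contra h
    push_neg at h
    have key : ∀ p ∈ normalConeGraph C, p.2 (x - p.1) ≤ 0 := by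
      intro p hp
      have h1 := h p.2 ⟨p.1, hp⟩
      have h2 : supportFn C p.2 ≤ ((p.2 p.1 : ℝ) : EReal) := by
        apply sSup_le
        rintro z ⟨y, hy, rfl⟩
        have hle := hp.2 y hy
        rw [map_sub] at hle
        show ((p.2 y : ℝ) : EReal) ≤ _
        exact_mod_cast (by linarith : p.2 y ≤ p.2 p.1)
      have h3 : ((p.2 x : ℝ) : EReal) ≤ ((p.2 p.1 : ℝ) : EReal) := le_trans h1 h2
      have h4 : p.2 x ≤ p.2 p.1 := EReal.coe_le_coe_iff.mp h3
      rw [map_sub]; linarith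
    have hmono' : IsMonotoneGraph (insert (x, (0 : X →L[ℝ] ℝ)) (normalConeGraph C)) := by
      rintro p (rfl | hp) q (rfl | hq)
      · simp
      · have := key q hq
        simp only [ContinuousLinearMap.sub_apply, ContinuousLinearMap.zero_apply]
        linarith
      · have := key p hp
        have heq : (p.2 - 0) (p.1 - x) = -(p.2 (x - p.1)) := by
          simp only [ContinuousLinearMap.sub_apply, ContinuousLinearMap.zero_apply, map_sub]
          ring
        rw [heq]; linarith
      · exact normalConeGraph_monotone C p hp q hq
    have heq := hmax _ hmono' (subset_insert _ _)
    have hxin : (x, (0 : X →L[ℝ] ℝ)) ∈ normalConeGraph C := heq ▸ mem_insert _ _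
    exact hx hxin.1
  · intro hsep
    have hC : C.Nonempty := by
      by_cases h0 : (0 : X) ∈ C
      · exact ⟨0, h0⟩
      · obtain ⟨n, ⟨a, ha⟩, -⟩ := hsep 0 h0
        exact ⟨a, ha.1⟩
    obtain ⟨c, hc⟩ := hC
    refine ⟨⟨(c, 0), zero_mem_normalConeGraph hc⟩, normalConeGraph_monotone C, ?_⟩
    intro G' hG' hsub
    apply Set.Subset.antisymm _ hsub
    rintro ⟨x, x'⟩ hxG
    have hxC : x ∈ C := by
      by_contra hxc
      obtain ⟨n, ⟨a, ha⟩, hlt⟩ := hsep x hxc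
      have h2 : ((n a : ℝ) : EReal) ≤ supportFn C n := le_sSup ⟨a, ha.1, rfl⟩
      have hlt' : n a < n x := by exact_mod_cast lt_of_le_of_lt h2 hlt
      have hpos : 0 < n (x - a) := by rw [map_sub]; linarith
      set t : ℝ := (x' (x - a) + 1) / n (x - a) with ht
      have htmax : 0 ≤ max t 0 := le_max_right _ _
      have hmem : (a, (max t 0) • n) ∈ normalConeGraph C := by
        refine ⟨ha.1, fun y hy => ?_⟩
        have := ha.2 y hy
        simp only [ContinuousLinearMap.smul_apply, smul_eq_mul]
        exact mul_nonpos_of_nonneg_of_nonpos htmax this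
      have hm := hG' _ hxG _ (hsub hmem)
      simp only [ContinuousLinearMap.sub_apply, ContinuousLinearMap.smul_apply,
        smul_eq_mul] at hm
      have h5 : t * n (x - a) ≤ max t 0 * n (x - a) :=
        mul_le_mul_of_nonneg_right (le_max_left _ _) (le_of_lt hpos)
      have h6 : t * n (x - a) = x' (x - a) + 1 := div_mul_cancel₀ _ (ne_of_gt hpos)
      linarith
    refine ⟨hxC, fun y hy => ?_⟩
    have hm := hG' _ hxG _ (hsub (zero_mem_normalConeGraph hy))
    simp only [ContinuousLinearMap.sub_apply, ContinuousLinearMap.zero_apply, map_sub] at hm ⊢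
    linarith
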